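/- arXiv:2205.15205 — 3 statements merged into one kernel-verified Lean document; each statement's English description precedes it below -/
import Mathlib

section
/- Let G be a finite group and let γ: G → Aut(G) be a map satisfying γ(xy)(z) = γ(x)(γ(y)(z)) for all x, y, z ∈ G and γ(β(x))(β(z)) = β(γ(x)(z)) for all x, z ∈ G and all automorphisms β of G. For each x ∈ G define the permutation ν(x) ∈ S(G) by ν(x)(z) = γ(x)(z)·x, and set x ∘ y = γ(y)(x)·y. Then N = {ν(x) : x ∈ G} is a normal regular subgroup of Hol(G), and the map x ↦ ν(x) is a group isomorphism from (G, ∘) onto N. -/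
/-- The image of the right regular representation `ρ : G → S(G)`, `ρ(y)(x) = x·y`,
as a subgroup of the symmetric group on `G`. -/
def RhoSubgroup (G : Type*) [Group G] : Subgroup (Equiv.Perm G) where
  carrier := {f : Equiv.Perm G | ∃ y : G, ∀ x : G, f x = x * y}
  one_mem' := ⟨1, fun x => (mul_one x).symm⟩
  mul_mem' := by
    rintro f g ⟨a, ha⟩ ⟨b, hb⟩
    refine ⟨b * a, fun x => ?_⟩
    simp only [Equiv.Perm.mul_apply, ha, hb, mul_assoc]
  inv_mem' := by
    rintro f ⟨a, ha⟩
    refine ⟨a⁻¹, fun x => ?_⟩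
    have h : f (x * a⁻¹) = x := by rw [ha]; simp
    conv_lhs => rw [← h]
    simp

/-- The holomorph `Hol(G) = N_{S(G)}(ρ(G))`. -/
def Hol (G : Type*) [Group G] : Subgroup (Equiv.Perm G) := Subgroup.normalizer (RhoSubgroup G : Set (Equiv.Perm G))

/-- The circle operation `x ∘ y = γ(y)(x) · y`. -/
def circOp {G : Type*} [Group G] (γ : G → G ≃* G) (x y : G) : G := γ y x * y

/-- The permutation `ν(x) : z ↦ γ(x)(z)·x` of `G`. -/
def nuPerm {G : Type*} [Group G] (γ : G → G ≃* G) (x : G) : Equiv.Perm G :=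
  (γ x).toEquiv.trans (Equiv.mulRight x)


/-!
Since `γ` is a homomorphism into `Aut(G)` that is equivariant under `Aut(G)`, the permutations
`ν(x) = ρ(x) ∘ γ(x)` satisfy `ν(x ∘ y) = ν(y) ν(x)`, so their set `N` is a subgroup; it lies in
`Hol(G) = ρ(G) ⋊ Aut(G)` and is regular because `ν(x)(1) = x`. Every element of `Hol(G)` has
the form `z ↦ c · σ(z)` with `σ ∈ Aut(G)`; conjugating `ν(x)` by `σ` gives `ν(σ(x))` by
equivariance, and conjugating by `z ↦ c · z` gives `ν(c · γ(x)(c⁻¹) · x)`, because both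
`c · γ(x)(c⁻¹) · x` and `c x c⁻¹` have the same image `γ(c) γ(x) γ(c)⁻¹` under `γ`.
-/

open Equiv

section Holomorph

variable {G : Type*} [Group G]

theorem mem_rhoSubgroup_iff {f : Perm G} : f ∈ RhoSubgroup G ↔ ∃ y : G, f = Equiv.mulRight y :=
  exists_congr fun y => (Equiv.ext_iff (f := f) (g := Equiv.mulRight y)).symm

theorem mulRight_mem_hol (a : G) : (Equiv.mulRight a : Perm G) ∈ Hol G :=
  Subgroup.le_normalizer (mem_rhoSubgroup_iff.mpr ⟨a, rfl⟩)

theorem mulEquiv_mul_mulRight_mul_inv (σ : G ≃* G) (a : G) :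
    (σ.toEquiv : Perm G) * Equiv.mulRight a * (σ.toEquiv : Perm G)⁻¹ = Equiv.mulRight (σ a) := by
  ext z
  simp [Perm.mul_apply, Perm.inv_def]

theorem mulEquiv_mem_hol (σ : G ≃* G) : (σ.toEquiv : Perm G) ∈ Hol G := by
  refine Subgroup.mem_normalizer_iff.mpr fun h => ?_
  simp only [mem_rhoSubgroup_iff]
  constructor
  · rintro ⟨a, rfl⟩
    exact ⟨σ a, mulEquiv_mul_mulRight_mul_inv σ a⟩
  · rintro ⟨b, hb⟩
    refine ⟨σ.symm b, ?_⟩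
    rw [← mulEquiv_mul_mulRight_mul_inv σ.symm b, ← hb]
    ext z
    simp [Perm.mul_apply, Perm.inv_def]

theorem exists_mulLeft_mul_mulEquiv_of_mem_hol {g : Perm G} (hg : g ∈ Hol G) :
    ∃ (c : G) (σ : G ≃* G), g = Equiv.mulLeft c * (σ.toEquiv : Perm G) := by
  have hshift : ∀ a u : G, g (u * a) = g u * ((g 1)⁻¹ * g a) := by
    intro a u
    obtain ⟨b, hb⟩ := mem_rhoSubgroup_iff.mp
      ((Subgroup.mem_normalizer_iff.mp hg _).mp (mem_rhoSubgroup_iff.mpr ⟨a, rfl⟩))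
    have hgb : ∀ w, g (w * a) = g w * b := fun w => by
      simpa [Perm.mul_apply, Perm.inv_def] using congrArg (· (g w)) hb
    have hb1 : b = (g 1)⁻¹ * g a := by rw [← one_mul a, hgb, inv_mul_cancel_left]
    rw [hgb, hb1]
  let σ : G ≃* G :=
    { g.trans (Equiv.mulLeft (g 1)⁻¹) with
      map_mul' := fun u a => by simp [hshift a u, mul_assoc] }
  refine ⟨g 1, σ, Equiv.ext fun z => ?_⟩
  simp [σ, Perm.mul_apply]

end Holomorph

section Nu

variable {G : Type*} [Group G] {γ : G → G ≃* G}

theorem nuPerm_apply (x z : G) : nuPerm γ x z = γ x z * x := rfl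

theorem nuPerm_apply_one (x : G) : nuPerm γ x 1 = x := by
  simp [nuPerm_apply]

theorem nuPerm_injective : Function.Injective (nuPerm γ) := fun a b h => by
  simpa only [nuPerm_apply_one] using congrArg (· 1) h

theorem nuPerm_eq_mulRight_mul (x : G) :
    nuPerm γ x = Equiv.mulRight x * ((γ x).toEquiv : Perm G) := rfl

theorem nuPerm_mem_hol (x : G) : nuPerm γ x ∈ Hol G :=
  nuPerm_eq_mulRight_mul (γ := γ) x ▸ (Hol G).mul_mem (mulRight_mem_hol x) (mulEquiv_mem_hol (γ x))

theorem apply_one_of_map_mul (h1 : ∀ x y z : G, γ (x * y) z = γ x (γ y z)) (z : G) :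
    γ 1 z = z :=
  (γ 1).injective (by rw [← h1, mul_one])

theorem nuPerm_one (h1 : ∀ x y z : G, γ (x * y) z = γ x (γ y z)) : nuPerm γ 1 = 1 :=
  Equiv.ext fun z => by simp [nuPerm_apply, apply_one_of_map_mul h1]

theorem nuPerm_circOp (h1 : ∀ x y z : G, γ (x * y) z = γ x (γ y z))
    (h2 : ∀ (β : G ≃* G) (x z : G), γ (β x) (β z) = β (γ x z)) (x y : G) :
    nuPerm γ (circOp γ x y) = nuPerm γ y * nuPerm γ x := by
  ext z
  rw [Perm.mul_apply, nuPerm_apply, nuPerm_apply, nuPerm_apply, circOp, h1, h2, map_mul,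
    ← mul_assoc]

theorem nuPerm_inv (h1 : ∀ x y z : G, γ (x * y) z = γ x (γ y z))
    (h2 : ∀ (β : G ≃* G) (x z : G), γ (β x) (β z) = β (γ x z)) (x : G) :
    (nuPerm γ x)⁻¹ = nuPerm γ ((γ x).symm x⁻¹) := by
  apply inv_eq_of_mul_eq_one_right
  rw [← nuPerm_circOp h1 h2, circOp, MulEquiv.apply_symm_apply, inv_mul_cancel, nuPerm_one h1]

def nuSubgroup (h1 : ∀ x y z : G, γ (x * y) z = γ x (γ y z))
    (h2 : ∀ (β : G ≃* G) (x z : G), γ (β x) (β z) = β (γ x z)) : Subgroup (Perm G) where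
  carrier := Set.range (nuPerm γ)
  one_mem' := ⟨1, nuPerm_one h1⟩
  mul_mem' := by
    rintro _ _ ⟨a, rfl⟩ ⟨b, rfl⟩
    exact ⟨circOp γ b a, nuPerm_circOp h1 h2 b a⟩
  inv_mem' := by
    rintro _ ⟨a, rfl⟩
    exact ⟨_, (nuPerm_inv h1 h2 a).symm⟩

theorem mulEquiv_mul_nuPerm_mul_inv
    (h2 : ∀ (β : G ≃* G) (x z : G), γ (β x) (β z) = β (γ x z))
    (σ : G ≃* G) (x : G) :
    (σ.toEquiv : Perm G) * nuPerm γ x * (σ.toEquiv : Perm G)⁻¹ = nuPerm γ (σ x) := by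
  ext z
  simp only [Perm.mul_apply, Perm.inv_def, nuPerm_apply, MulEquiv.toEquiv_eq_coe,
    MulEquiv.coe_toEquiv, MulEquiv.coe_toEquiv_symm, map_mul]
  rw [← h2, MulEquiv.apply_symm_apply]

theorem apply_mul_apply_inv_mul_apply (h1 : ∀ x y z : G, γ (x * y) z = γ x (γ y z))
    (h2 : ∀ (β : G ≃* G) (x z : G), γ (β x) (β z) = β (γ x z)) (c x z : G) :
    γ (c * γ x c⁻¹ * x) z = c * γ x (c⁻¹ * z * c) * c⁻¹ :=
  calc γ (c * γ x c⁻¹ * x) z = γ c (γ (γ x c⁻¹) (γ x z)) := by rw [h1, h1]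
    _ = γ (c * x * c⁻¹) z := by rw [h2, h1, h1]
    _ = γ (MulAut.conj c x) (MulAut.conj c (c⁻¹ * z * c)) := by simp [mul_assoc]
    _ = c * γ x (c⁻¹ * z * c) * c⁻¹ := h2 _ _ _

theorem mulLeft_mul_nuPerm_mul_inv (h1 : ∀ x y z : G, γ (x * y) z = γ x (γ y z))
    (h2 : ∀ (β : G ≃* G) (x z : G), γ (β x) (β z) = β (γ x z)) (c x : G) :
    Equiv.mulLeft c * nuPerm γ x * (Equiv.mulLeft c)⁻¹ = nuPerm γ (c * γ x c⁻¹ * x) := by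
  ext w
  rw [nuPerm_apply, apply_mul_apply_inv_mul_apply h1 h2]
  simp only [Perm.mul_apply, Perm.inv_def, mulLeft_symm_apply, coe_mulLeft, nuPerm_apply,
    map_mul, map_inv]
  group

variable (h1 : ∀ x y z : G, γ (x * y) z = γ x (γ y z))
  (h2 : ∀ (β : G ≃* G) (x z : G), γ (β x) (β z) = β (γ x z))

theorem mem_nuSubgroup {f : Perm G} : f ∈ nuSubgroup h1 h2 ↔ ∃ x : G, f = nuPerm γ x :=
  exists_congr fun _ => eq_comm

theorem nuPerm_mem_nuSubgroup (x : G) : nuPerm γ x ∈ nuSubgroup h1 h2 := ⟨x, rfl⟩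

theorem nuSubgroup_le_hol : nuSubgroup h1 h2 ≤ Hol G := by
  rintro _ ⟨x, rfl⟩
  exact nuPerm_mem_hol x

/-- `f ∘ ν(x)` and `g ∘ ν(x)` lie in `N` and agree at `1`, and `ν(a)` is determined by
`ν(a)(1) = a`. -/
theorem eq_of_apply_eq_of_mem_nuSubgroup {f g : Perm G} (hf : f ∈ nuSubgroup h1 h2)
    (hg : g ∈ nuSubgroup h1 h2) {x : G} (hfg : f x = g x) : f = g := by
  obtain ⟨a, ha⟩ := (mem_nuSubgroup h1 h2).mp ((nuSubgroup h1 h2).mul_mem hf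
    (nuPerm_mem_nuSubgroup h1 h2 x))
  obtain ⟨b, hb⟩ := (mem_nuSubgroup h1 h2).mp ((nuSubgroup h1 h2).mul_mem hg
    (nuPerm_mem_nuSubgroup h1 h2 x))
  have hab : a = b := by
    rw [← nuPerm_apply_one (γ := γ) a, ← nuPerm_apply_one (γ := γ) b, ← ha, ← hb,
      Perm.mul_apply, Perm.mul_apply, nuPerm_apply_one, hfg]
  exact mul_right_cancel (ha.trans (hab ▸ hb.symm))

theorem existsUnique_mem_nuSubgroup_apply_eq (x y : G) :
    ∃! f : Perm G, f ∈ nuSubgroup h1 h2 ∧ f x = y := by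
  have hmem : nuPerm γ y * (nuPerm γ x)⁻¹ ∈ nuSubgroup h1 h2 :=
    (nuSubgroup h1 h2).mul_mem (nuPerm_mem_nuSubgroup h1 h2 y)
      ((nuSubgroup h1 h2).inv_mem (nuPerm_mem_nuSubgroup h1 h2 x))
  have hxy : (nuPerm γ y * (nuPerm γ x)⁻¹) x = y := by
    rw [Perm.mul_apply, Perm.inv_eq_iff_eq.mpr (nuPerm_apply_one x).symm, nuPerm_apply_one]
  refine ⟨_, ⟨hmem, hxy⟩, fun f ⟨hf, hfx⟩ => ?_⟩
  exact eq_of_apply_eq_of_mem_nuSubgroup h1 h2 hf hmem (hfx.trans hxy.symm)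

theorem mul_nuPerm_mul_inv_mem_nuSubgroup {g : Perm G} (hg : g ∈ Hol G) (x : G) :
    g * nuPerm γ x * g⁻¹ ∈ nuSubgroup h1 h2 := by
  obtain ⟨c, σ, rfl⟩ := exists_mulLeft_mul_mulEquiv_of_mem_hol hg
  rw [show Equiv.mulLeft c * (σ.toEquiv : Perm G) * nuPerm γ x * (Equiv.mulLeft c * σ.toEquiv)⁻¹ =
      Equiv.mulLeft c * ((σ.toEquiv : Perm G) * nuPerm γ x * (σ.toEquiv : Perm G)⁻¹) *
        (Equiv.mulLeft c)⁻¹ by group,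
    mulEquiv_mul_nuPerm_mul_inv h2, mulLeft_mul_nuPerm_mul_inv h1 h2]
  exact nuPerm_mem_nuSubgroup h1 h2 _

theorem nuSubgroup_subgroupOf_hol_normal : ((nuSubgroup h1 h2).subgroupOf (Hol G)).Normal :=
  (Subgroup.normal_subgroupOf_iff (nuSubgroup_le_hol h1 h2)).mpr fun _ _ ⟨x, hx⟩ hg =>
    hx ▸ mul_nuPerm_mul_inv_mem_nuSubgroup h1 h2 hg x

end Nu

theorem stmt_4_general {G : Type*} [Group G] (γ : G → G ≃* G)
    (h1 : ∀ x y z : G, γ (x * y) z = γ x (γ y z))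
    (h2 : ∀ (β : G ≃* G) (x z : G), γ (β x) (β z) = β (γ x z)) :
    ∃ N : Subgroup (Equiv.Perm G),
      (∀ f : Equiv.Perm G, f ∈ N ↔ ∃ x : G, f = nuPerm γ x) ∧
      N ≤ Hol G ∧ (N.subgroupOf (Hol G)).Normal ∧
      (∀ x y : G, ∃! f : Equiv.Perm G, f ∈ N ∧ f x = y) ∧
      Function.Injective (nuPerm γ) ∧
      (∀ x y z : G, nuPerm γ (circOp γ x y) z = nuPerm γ y (nuPerm γ x z)) :=
  ⟨nuSubgroup h1 h2, fun _ => mem_nuSubgroup h1 h2, nuSubgroup_le_hol h1 h2,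
    nuSubgroup_subgroupOf_hol_normal h1 h2, existsUnique_mem_nuSubgroup_apply_eq h1 h2,
    nuPerm_injective, fun x y _ => by rw [nuPerm_circOp h1 h2, Perm.mul_apply]⟩

/-- given an `Aut(G)`-equivariant anti-homomorphism `γ : G → Aut(G)`,
the set `N = {ν(x) : x ∈ G}`, where `ν(x)(z) = γ(x)(z)·x`, is a normal regular subgroup
of `Hol(G)`, and `x ↦ ν(x)` is an isomorphism from the circle group `(G, ∘)` onto `N`
(in the left-to-right composition convention, i.e. `ν(x ∘ y)(z) = ν(y)(ν(x)(z))`). -/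
theorem stmt_4 {G : Type*} [Group G] [Fintype G] (γ : G → G ≃* G)
    (h1 : ∀ x y z : G, γ (x * y) z = γ x (γ y z))
    (h2 : ∀ (β : G ≃* G) (x z : G), γ (β x) (β z) = β (γ x z)) :
    ∃ N : Subgroup (Equiv.Perm G),
      (∀ f : Equiv.Perm G, f ∈ N ↔ ∃ x : G, f = nuPerm γ x) ∧
      N ≤ Hol G ∧ (N.subgroupOf (Hol G)).Normal ∧
      (∀ x y : G, ∃! f : Equiv.Perm G, f ∈ N ∧ f x = y) ∧
      Function.Injective (nuPerm γ) ∧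
      (∀ x y z : G, nuPerm γ (circOp γ x y) z = nuPerm γ y (nuPerm γ x z)) :=
  stmt_4_general γ h1 h2
end

section
/- Let p be an odd prime and let G be a nonabelian finite p-group of nilpotency class two. Let c and d be integers such that d(2c+1) ≡ 1 (mod exp(G')), where exp(G') is the exponent of the derived subgroup G'. Then the map θ_d: G → G, θ_d(x) = x^d, is a bijection and satisfies (xy)^d = x^d · y^d · [x^d, y^d]^c for all x, y ∈ G; that is, θ_d is an isomorphism from G onto (G, ∘_{[c]}), where x ∘_{[c]} y = x·y·[x, y]^c. -/
/-!
In a group of class two the commutator map is central and bimultiplicative, which gives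
`(xy)^d = x^d y^d ⁅y, x⁆^(d(d-1)/2)` and `[x^d, y^d] = ⁅y, x⁆^(-d²)` (Mathlib's
`⁅a, b⁆ = a b a⁻¹ b⁻¹`). The identity thus reduces to `d(d-1)/2 ≡ -d²c` modulo `exp(G')`:
doubled, this is `d²(2c+1) ≡ d`, and `2` is invertible modulo the odd number `exp(G')`.
Since `G` is nonabelian, `p ∣ exp(G')`, so `d` is prime to `p` and `x ↦ x^d` is a bijection
of the `p`-group `G`.
-/

/-- The commutator `[x, y] = x⁻¹ * y⁻¹ * x * y` in the paper's convention. -/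
def pcomm {G : Type*} [Group G] (x y : G) : G := x⁻¹ * y⁻¹ * x * y

open Subgroup
open scoped commutatorElement

theorem Int.mul_sub_one_ediv_two_add_one (n : ℤ) :
    (n + 1) * (n + 1 - 1) / 2 = n * (n - 1) / 2 + n := by
  rw [show (n + 1) * (n + 1 - 1) = n * (n - 1) + n * 2 by ring,
    Int.add_mul_ediv_right _ _ two_ne_zero]

theorem Int.mul_sub_one_ediv_two_modEq {q c d : ℤ} (hq : Odd q)
    (hcd : d * (2 * c + 1) ≡ 1 [ZMOD q]) : d * (d - 1) / 2 ≡ -(d * d) * c [ZMOD q] := by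
  obtain ⟨k, hk⟩ := Int.modEq_iff_dvd.1 hcd
  have htwo : 2 * (d * (d - 1) / 2) = d * (d - 1) :=
    Int.mul_ediv_cancel' (Int.even_mul_pred_self d).two_dvd
  refine Int.modEq_iff_dvd.2 ((Int.isCoprime_two_right.2 hq).dvd_of_dvd_mul_right ⟨d * k, ?_⟩)
  linear_combination (-1 : ℤ) * htwo + d * hk

theorem IsPGroup.zpow_bijective {p : ℕ} {G : Type*} [Group G] (hG : IsPGroup p G) {d : ℤ}
    (hd : IsCoprime (p : ℤ) d) : Function.Bijective fun x : G ↦ x ^ d := by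
  have hn : p.Coprime d.natAbs := Int.isCoprime_iff_gcd_eq_one.1 hd
  rcases Int.natAbs_eq d with h | h <;> rw [h]
  · simp only [zpow_natCast]
    exact (hG.powEquiv hn).bijective
  · simp only [zpow_neg, zpow_natCast]
    exact inv_bijective.comp (hG.powEquiv hn).bijective

theorem IsPGroup.dvd_exponent {p : ℕ} [Fact p.Prime] {G : Type*} [Group G] [Finite G]
    [Nontrivial G] (hG : IsPGroup p G) : p ∣ Monoid.exponent G := by
  obtain ⟨k, hk⟩ := hG.exists_exponent_eq_pow
  rcases k with _ | k
  · rw [pow_zero, Monoid.exp_eq_one_iff] at hk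
    exact absurd hk (not_subsingleton G)
  · exact hk ▸ dvd_pow_self p k.succ_ne_zero

theorem IsPGroup.odd_exponent {p : ℕ} [Fact p.Prime] (hp : Odd p) {G : Type*} [Group G]
    [Finite G] (hG : IsPGroup p G) : Odd (Monoid.exponent G) := by
  obtain ⟨k, hk⟩ := hG.exists_exponent_eq_pow
  exact hk ▸ hp.pow

section CommutatorLeCenter

variable {G : Type*} [Group G]

theorem commutator_le_center_of_lowerCentralSeries_two_eq_bot
    (h : (⊤ : Subgroup G).lowerCentralSeries 2 = ⊥) : commutator G ≤ center G := by
  rwa [Subgroup.lowerCentralSeries_succ, top_lowerCentralSeries_one,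
    commutator_top_right_eq_bot_iff_le_center] at h

theorem commutatorElement_mem_commutator (a b : G) : ⁅a, b⁆ ∈ commutator G :=
  commutator_mem_commutator (mem_top a) (mem_top b)

theorem orderOf_commutatorElement_dvd_exponent (a b : G) :
    orderOf ⁅a, b⁆ ∣ Monoid.exponent (commutator G) :=
  Subgroup.orderOf_mk ⁅a, b⁆ (commutatorElement_mem_commutator a b) ▸
    Monoid.order_dvd_exponent _

theorem commute_commutatorElement_of_le_center (hG : commutator G ≤ center G) (a b z : G) :
    Commute ⁅a, b⁆ z :=
  (mem_center_iff.1 (hG (commutatorElement_mem_commutator a b)) z).symm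

theorem commutatorElement_mul_left_of_le_center (hG : commutator G ≤ center G) (a a' b : G) :
    ⁅a * a', b⁆ = ⁅a, b⁆ * ⁅a', b⁆ := by
  have h := commute_commutatorElement_of_le_center hG a' b
  rw [commutatorElement_mul_left_eq_conj_mul, ← (h a).eq, mul_inv_cancel_right, (h _).eq]

theorem commutatorElement_zpow_left_of_le_center (hG : commutator G ≤ center G) (a b : G)
    (n : ℤ) : ⁅a ^ n, b⁆ = ⁅a, b⁆ ^ n :=
  map_zpow (MonoidHom.mk' (⁅·, b⁆) (commutatorElement_mul_left_of_le_center hG · · b)) a n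

theorem commutatorElement_zpow_zpow_of_le_center (hG : commutator G ≤ center G) (a b : G)
    (m n : ℤ) : ⁅a ^ m, b ^ n⁆ = ⁅a, b⁆ ^ (m * n) := by
  rw [commutatorElement_zpow_left_of_le_center hG, ← commutatorElement_inv,
    commutatorElement_zpow_left_of_le_center hG, ← inv_zpow, commutatorElement_inv, ← zpow_mul,
    mul_comm n m]

theorem mul_zpow_step_of_le_center (hG : commutator G ≤ center G) (x y : G) (n e : ℤ) :
    x ^ n * y ^ n * ⁅y, x⁆ ^ e * (x * y) = x ^ (n + 1) * y ^ (n + 1) * ⁅y, x⁆ ^ (e + n) := by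
  have ht (k : ℤ) (z : G) : Commute (⁅y, x⁆ ^ k) z :=
    (commute_commutatorElement_of_le_center hG y x z).zpow_left k
  have hswap : y ^ n * x = x * y ^ n * ⁅y, x⁆ ^ n := by
    rw [← commutatorElement_zpow_left_of_le_center hG,
      ← (commute_commutatorElement_of_le_center hG (y ^ n) x (x * y ^ n)).eq,
      commutatorElement_def]
    group
  calc x ^ n * y ^ n * ⁅y, x⁆ ^ e * (x * y) = x ^ n * (y ^ n * x) * y * ⁅y, x⁆ ^ e := by
        rw [mul_assoc _ (⁅y, x⁆ ^ e), (ht e _).eq]; simp only [mul_assoc]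
    _ = x ^ n * x * y ^ n * y * (⁅y, x⁆ ^ n * ⁅y, x⁆ ^ e) := by
        rw [hswap]; simp only [mul_assoc, (ht n y).left_comm]
    _ = x ^ (n + 1) * y ^ (n + 1) * ⁅y, x⁆ ^ (e + n) := by
        rw [add_comm e n]; simp only [zpow_add, zpow_one, mul_assoc]

theorem mul_zpow_of_le_center (hG : commutator G ≤ center G) (x y : G) (n : ℤ) :
    (x * y) ^ n = x ^ n * y ^ n * ⁅y, x⁆ ^ (n * (n - 1) / 2) := by
  have step (n : ℤ) : (x * y) ^ (n + 1) =
        x ^ (n + 1) * y ^ (n + 1) * ⁅y, x⁆ ^ ((n + 1) * (n + 1 - 1) / 2) ↔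
      (x * y) ^ n = x ^ n * y ^ n * ⁅y, x⁆ ^ (n * (n - 1) / 2) := by
    rw [zpow_add_one, Int.mul_sub_one_ediv_two_add_one, ← mul_zpow_step_of_le_center hG,
      mul_left_inj]
  induction n using Int.induction_on with
  | zero => simp
  | succ k ih => exact (step k).2 ih
  | pred k ih => exact (step (-k - 1)).1 (by rwa [sub_add_cancel])

theorem pcomm_eq_commutatorElement (x y : G) : pcomm x y = ⁅x⁻¹, y⁻¹⁆ := by
  simp only [pcomm, commutatorElement_def, inv_inv]

theorem pcomm_zpow_zpow_of_le_center (hG : commutator G ≤ center G) (x y : G) (m n : ℤ) :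
    pcomm (x ^ m) (y ^ n) = ⁅y, x⁆ ^ (-(m * n)) := by
  rw [pcomm_eq_commutatorElement, ← zpow_neg, ← zpow_neg,
    commutatorElement_zpow_zpow_of_le_center hG, ← commutatorElement_inv, inv_zpow, ← zpow_neg]
  ring_nf

end CommutatorLeCenter

/-- let `p` be an odd prime, `G` a nonabelian finite `p`-group of class two,
and `c, d` integers with `d(2c+1) ≡ 1 (mod exp(G'))`.  Then `x ↦ x^d` is a bijection of
`G` satisfying `(xy)^d = x^d · y^d · [x^d, y^d]^c`, i.e. an isomorphism from `G` onto
`(G, ∘_{[c]})` where `x ∘_{[c]} y = x·y·[x,y]^c`. -/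
theorem stmt_8 {p : ℕ} (hp : p.Prime) (hodd : Odd p)
    {G : Type*} [Group G] [Fintype G] (hpG : IsPGroup p G)
    (hc2 : (⊤ : Subgroup G).lowerCentralSeries 2 = ⊥) (hc1 : (⊤ : Subgroup G).lowerCentralSeries 1 ≠ ⊥)
    (c d : ℤ)
    (hcd : d * (2 * c + 1) ≡ 1 [ZMOD (Monoid.exponent ↥(commutator G) : ℤ)]) :
    Function.Bijective (fun x : G => x ^ d) ∧
    ∀ x y : G, (x * y) ^ d = x ^ d * y ^ d * (pcomm (x ^ d) (y ^ d)) ^ c := by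
  have : Fact p.Prime := ⟨hp⟩
  have hG := commutator_le_center_of_lowerCentralSeries_two_eq_bot hc2
  have hG' : IsPGroup p (commutator G) := hpG.to_subgroup _
  have : Nontrivial (commutator G) := by
    rwa [nontrivial_iff_ne_bot, ← top_lowerCentralSeries_one]
  have hdq : IsCoprime d (Monoid.exponent (commutator G) : ℤ) := by
    obtain ⟨k, hk⟩ := Int.modEq_iff_dvd.1 hcd
    exact ⟨2 * c + 1, k, by linear_combination -hk⟩
  refine ⟨hpG.zpow_bijective (hdq.of_isCoprime_of_dvd_right
    (Int.natCast_dvd_natCast.2 hG'.dvd_exponent)).symm, fun x y ↦ ?_⟩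
  rw [mul_zpow_of_le_center hG, pcomm_zpow_zpow_of_le_center hG, ← zpow_mul]
  congr 1
  exact zpow_eq_zpow_iff_modEq.2 <| (Int.mul_sub_one_ediv_two_modEq
    (hG'.odd_exponent hodd).natCast hcd).of_dvd <|
      Int.natCast_dvd_natCast.2 (orderOf_commutatorElement_dvd_exponent y x)
end

section
/- Let p be an odd prime, let n ≥ 2 be an integer, and let G be a finite p-group of nilpotency class two with G' = Z(G), generated by elements x₁, …, x_n, such that G/G' is elementary abelian of order p^n with the images of x₁, …, x_n as an F_p-basis, and G' is elementary abelian of order p^{n(n−1)/2} with the commutators [x_j, x_k] (1 ≤ j < k ≤ n) as an F_p-basis. Then a map Δ: G × G → G' is an anti-symmetric bilinear form on G if and only if there exists an endomorphism σ of G' such that Δ(x, y) = σ([x, y]) for all x, y ∈ G. -/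
open scoped commutatorElement in
theorem pcomm_mem_commutator {G : Type*} [Group G] (x y : G) :
    pcomm x y ∈ commutator G := by
  have h : pcomm x y = ⁅x⁻¹, y⁻¹⁆ := by
    simp [pcomm, commutatorElement_def, mul_assoc]
  rw [h, commutator_def]
  exact Subgroup.commutator_mem_commutator (Subgroup.mem_top _) (Subgroup.mem_top _)

/-- A bilinear form on a group `G` of class two with `G' = Z(G)`: a map
`Δ : G/G' × G/G' → G'` which is multiplicative in each variable. -/
def IsBilinearForm {G : Type*} [Group G] (Δ : G → G → G) : Prop :=
  (∀ x y : G, Δ x y ∈ commutator G) ∧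
  (∀ x y w : G, w ∈ commutator G → Δ (x * w) y = Δ x y) ∧
  (∀ x y w : G, w ∈ commutator G → Δ x (y * w) = Δ x y) ∧
  (∀ x₁ x₂ y : G, Δ (x₁ * x₂) y = Δ x₁ y * Δ x₂ y) ∧
  (∀ x y₁ y₂ : G, Δ x (y₁ * y₂) = Δ x y₁ * Δ x y₂)

/-- The circle operation `x ∘ y = x·y·Δ(x, y)` associated to a bilinear form `Δ`. -/
def circ {G : Type*} [Group G] (Δ : G → G → G) (x y : G) : G := x * y * Δ x y

/-- The circle inverse `x^{⊖1} = x⁻¹·Δ(x, x)`. -/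
def oinv {G : Type*} [Group G] (Δ : G → G → G) (x : G) : G := x⁻¹ * Δ x x

/-- The circle commutator `[x, y]_∘ = x^{⊖1} ∘ y^{⊖1} ∘ x ∘ y`. -/
def ocomm {G : Type*} [Group G] (Δ : G → G → G) (x y : G) : G :=
  circ Δ (circ Δ (circ Δ (oinv Δ x) (oinv Δ y)) x) y

/-!
Since `G'` is central, the commutator map is bimultiplicative, antisymmetric and kills `G'`,
so `(a, b) ↦ σ [a, b]` is an antisymmetric bilinear form for every endomorphism `σ` of `G'`.
Conversely, given `Δ`, the commutators `[x_j, x_k]` (`j < k`) form a basis of the elementary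
abelian group `G'`, so some endomorphism `σ` sends each of them to `Δ(x_j, x_k)`. Then `Δ` and
`σ ∘ [·, ·]` agree on `(x_j, x_k)` for `j < k`, hence by antisymmetry also for `j > k`, and on
the diagonal both vanish because an element of odd order equal to its own inverse is trivial.
Two bimultiplicative maps agreeing on a generating set agree everywhere.
-/

open Subgroup

section Commutator

variable {G : Type*} [Group G]

theorem pcomm_swap (a b : G) : pcomm b a = (pcomm a b)⁻¹ := by
  simp only [pcomm]; group

theorem pcomm_mul_left (hZ : commutator G ≤ center G) (a b c : G) :
    pcomm (a * b) c = pcomm a c * pcomm b c := by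
  have hcen : pcomm a c * b = b * pcomm a c :=
    (mem_center_iff.mp (hZ (pcomm_mem_commutator a c)) b).symm
  calc pcomm (a * b) c = b⁻¹ * (pcomm a c * b) * pcomm b c := by simp only [pcomm]; group
    _ = pcomm a c * pcomm b c := by rw [hcen]; group

theorem pcomm_mul_right (hZ : commutator G ≤ center G) (a b c : G) :
    pcomm a (b * c) = pcomm a b * pcomm a c := by
  rw [pcomm_swap, pcomm_mul_left hZ, mul_inv_rev, ← pcomm_swap, ← pcomm_swap]
  exact (mem_center_iff.mp (hZ (pcomm_mem_commutator a c)) _).symm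

theorem pcomm_mul_mem_center_left {w : G} (hw : w ∈ center G) (a b : G) :
    pcomm (a * w) b = pcomm a b := by
  have hwb : w * b = b * w := (mem_center_iff.mp hw b).symm
  calc pcomm (a * w) b = w⁻¹ * (a⁻¹ * b⁻¹ * a * (w * b)) := by simp only [pcomm]; group
    _ = w⁻¹ * (pcomm a b * w) := by rw [hwb]; simp only [pcomm]; group
    _ = pcomm a b := by rw [mem_center_iff.mp hw, inv_mul_cancel_left]

theorem pcomm_mul_mem_center_right {w : G} (hw : w ∈ center G) (a b : G) :
    pcomm a (b * w) = pcomm a b := by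
  rw [pcomm_swap, pcomm_mul_mem_center_left hw, ← pcomm_swap]

theorem isBilinearForm_comp_pcomm (hZ : commutator G ≤ center G)
    (σ : commutator G →* commutator G) :
    IsBilinearForm fun a b => (σ ⟨pcomm a b, pcomm_mem_commutator a b⟩ : G) := by
  refine ⟨fun a b => (σ _).2, fun a b w hw => ?_, fun a b w hw => ?_,
    fun a₁ a₂ b => ?_, fun a b₁ b₂ => ?_⟩
  · simp only [pcomm_mul_mem_center_left (hZ hw)]
  · simp only [pcomm_mul_mem_center_right (hZ hw)]
  · rw [← coe_mul, ← map_mul]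
    exact congrArg (fun g => (σ g : G)) (Subtype.ext (pcomm_mul_left hZ a₁ a₂ b))
  · rw [← coe_mul, ← map_mul]
    exact congrArg (fun g => (σ g : G)) (Subtype.ext (pcomm_mul_right hZ a b₁ b₂))

theorem comp_pcomm_swap (σ : commutator G →* commutator G) (a b : G) :
    (σ ⟨pcomm b a, pcomm_mem_commutator b a⟩ : G) =
      (σ ⟨pcomm a b, pcomm_mem_commutator a b⟩ : G)⁻¹ := by
  rw [← coe_inv, ← map_inv]
  exact congrArg (fun g => (σ g : G)) (Subtype.ext (pcomm_swap a b))

end Commutator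

def IsBimultiplicative {G H : Type*} [Mul G] [Mul H] (Δ : G → G → H) : Prop :=
  (∀ a₁ a₂ b, Δ (a₁ * a₂) b = Δ a₁ b * Δ a₂ b) ∧ ∀ a b₁ b₂, Δ a (b₁ * b₂) = Δ a b₁ * Δ a b₂

theorem IsBilinearForm.isBimultiplicative {G : Type*} [Group G] {Δ : G → G → G}
    (hΔ : IsBilinearForm Δ) : IsBimultiplicative Δ :=
  hΔ.2.2.2

theorem IsBimultiplicative.eq_of_eqOn_closure {G H : Type*} [Group G] [Group H]
    {Δ₁ Δ₂ : G → G → H} (h₁ : IsBimultiplicative Δ₁) (h₂ : IsBimultiplicative Δ₂)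
    {s : Set G} (hs : closure s = ⊤) (h : ∀ a ∈ s, ∀ b ∈ s, Δ₁ a b = Δ₂ a b) : Δ₁ = Δ₂ := by
  have h_left : ∀ a ∈ s, ∀ b, Δ₁ a b = Δ₂ a b := fun a ha =>
    congrFun <| congrArg DFunLike.coe <| MonoidHom.eq_of_eqOn_dense hs
      (f := MonoidHom.mk' (Δ₁ a) (h₁.2 a)) (g := MonoidHom.mk' (Δ₂ a) (h₂.2 a)) (h a ha)
  funext a b
  exact congrFun (congrArg DFunLike.coe <| MonoidHom.eq_of_eqOn_dense hs
    (f := MonoidHom.mk' (Δ₁ · b) (h₁.1 · · b)) (g := MonoidHom.mk' (Δ₂ · b) (h₂.1 · · b))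
    fun a ha => h_left a ha b) a

theorem eq_one_of_eq_inv_of_pow_odd {G : Type*} [Group G] {g : G} {p : ℕ} (hp : Odd p)
    (hinv : g = g⁻¹) (hpow : g ^ p = 1) : g = 1 := by
  obtain ⟨m, rfl⟩ := hp
  have hsq : g ^ 2 = 1 := by rw [sq]; nth_rewrite 2 [hinv]; exact mul_inv_cancel g
  rwa [pow_succ, pow_mul, hsq, one_pow, one_mul] at hpow

theorem eq_of_antisymm_of_eq_on_lt {G H ι : Type*} [Group H] [LinearOrder ι] (x : ι → G)
    {Δ₁ Δ₂ : G → G → H} (hanti₁ : ∀ a b, Δ₁ b a = (Δ₁ a b)⁻¹)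
    (hanti₂ : ∀ a b, Δ₂ b a = (Δ₂ a b)⁻¹) (hdiag₁ : ∀ g, Δ₁ g g = 1) (hdiag₂ : ∀ g, Δ₂ g g = 1)
    (h : ∀ i j, i < j → Δ₁ (x i) (x j) = Δ₂ (x i) (x j)) (i j : ι) :
    Δ₁ (x i) (x j) = Δ₂ (x i) (x j) := by
  rcases lt_trichotomy i j with hij | rfl | hji
  · exact h i j hij
  · rw [hdiag₁, hdiag₂]
  · rw [hanti₁, hanti₂, h j i hji]

theorem IsBilinearForm.apply_self_eq_one {G : Type*} [Group G] {Δ : G → G → G} {p : ℕ}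
    (hp : Odd p) (hexp : ∀ g ∈ commutator G, g ^ p = 1) (hΔ : IsBilinearForm Δ)
    (hanti : ∀ a b, Δ b a = (Δ a b)⁻¹) (g : G) : Δ g g = 1 :=
  eq_one_of_eq_inv_of_pow_odd hp (hanti g g) (hexp _ (hΔ.1 g g))

section Basis

variable {M N ι : Type*} [CommGroup M] [CommGroup N] [Fintype ι] {p : ℕ}

theorem prod_pow_val_add [NeZero p] {c : ι → N} (hc : ∀ i, c i ^ p = 1) (e f : ι → ZMod p) :
    ∏ i, c i ^ (e i + f i).val = (∏ i, c i ^ (e i).val) * ∏ i, c i ^ (f i).val := by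
  rw [← Finset.prod_mul_distrib]
  refine Finset.prod_congr rfl fun i _ => ?_
  rw [ZMod.val_add, ← pow_eq_pow_mod _ (hc i), pow_add]

theorem prod_pow_val_single [DecidableEq ι] [Fact (1 < p)] (c : ι → N) (j : ι) :
    ∏ i, c i ^ (Pi.single (M := fun _ => ZMod p) j 1 i).val = c j := by
  rw [Fintype.prod_eq_single j fun i hi => by simp [hi]]
  simp [ZMod.val_one]

theorem exists_monoidHom_apply_eq_of_existsUnique_repr [Fact (1 < p)] {b : ι → M}
    (hb : ∀ i, b i ^ p = 1) (hrepr : ∀ g, ∃! e : ι → ZMod p, g = ∏ i, b i ^ (e i).val)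
    (c : ι → N) (hc : ∀ i, c i ^ p = 1) : ∃ σ : M →* N, ∀ i, σ (b i) = c i := by
  classical
  choose E hE hE_unique using hrepr
  have hE_mul : ∀ g h, E (g * h) = E g + E h := fun g h =>
    (hE_unique _ _ (by
      simp only [Pi.add_apply]; rw [prod_pow_val_add hb, ← hE, ← hE])).symm
  have hE_basis : ∀ j, E (b j) = Pi.single j 1 :=
    fun j => (hE_unique _ _ (prod_pow_val_single b j).symm).symm
  refine ⟨MonoidHom.mk' (fun g => ∏ i, c i ^ (E g i).val) fun g h => ?_, fun j => ?_⟩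
  · rw [hE_mul, Pi.add_def, prod_pow_val_add hc]
  · rw [MonoidHom.mk'_apply, hE_basis, prod_pow_val_single]

end Basis

open scoped IsMulCommutative in
theorem Subgroup.exists_endomorphism_apply_eq_of_existsUnique_repr {G ι : Type*} [Group G]
    [Fintype ι] {p : ℕ} [Fact (1 < p)] {K : Subgroup G} (hK : K ≤ center G)
    (hexp : ∀ g ∈ K, g ^ p = 1) {b : ι → K}
    (hrepr : ∀ g ∈ K, ∃! e : ι → ZMod p,
      g = ((Finset.univ : Finset ι).toList.map fun i => (b i : G) ^ (e i).val).prod)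
    (c : ι → K) : ∃ σ : K →* K, ∀ i, σ (b i) = c i := by
  have : IsMulCommutative K :=
    IsMulCommutative.of_comm fun g h => Subtype.ext (mem_center_iff.mp (hK h.2) g)
  have hpow : ∀ g : K, g ^ p = 1 := fun g => Subtype.ext (hexp g g.2)
  refine exists_monoidHom_apply_eq_of_existsUnique_repr (fun i => hpow (b i)) (fun g => ?_) c
    fun i => hpow (c i)
  have hcoe : ∀ e : ι → ZMod p, ((∏ i, b i ^ (e i).val : K) : G) =
      ((Finset.univ : Finset ι).toList.map fun i => (b i : G) ^ (e i).val).prod := by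
    intro e
    rw [← Finset.prod_map_toList, SubmonoidClass.coe_list_prod, List.map_map]
    rfl
  simpa only [Subtype.ext_iff, hcoe] using hrepr g g.2

theorem stmt_18_general {p n : ℕ} (hp : p.Prime) (hodd : Odd p)
    {G : Type*} [Group G]
    (hGZ : commutator G = Subgroup.center G)
    (x : Fin n → G) (hgen : Subgroup.closure (Set.range x) = ⊤)
    -- `G'` is elementary abelian of order `p^{n(n-1)/2}` …
    (hDexp : ∀ g ∈ commutator G, g ^ p = 1)
    -- … with the commutators `[x_j, x_k]`, `j < k`, as an `F_p`-basis
    (hDbasis : ∀ g ∈ commutator G,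
      ∃! e : {q : Fin n × Fin n // q.1 < q.2} → ZMod p,
        g = (((Finset.univ : Finset {q : Fin n × Fin n // q.1 < q.2}).toList.map
          (fun q => (pcomm (x q.1.1) (x q.1.2)) ^ (e q).val)).prod)) :
    ∀ Δ : G → G → G,
      (IsBilinearForm Δ ∧ ∀ a b : G, Δ b a = (Δ a b)⁻¹) ↔
      ∃ σ : ↥(commutator G) →* ↥(commutator G),
        ∀ a b : G, Δ a b = ↑(σ ⟨pcomm a b, pcomm_mem_commutator a b⟩) := by
  have : Fact (1 < p) := ⟨hp.one_lt⟩
  have hZ : commutator G ≤ center G := hGZ.le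
  intro Δ
  constructor
  · rintro ⟨hΔ, hanti⟩
    obtain ⟨σ, hσ⟩ := Subgroup.exists_endomorphism_apply_eq_of_existsUnique_repr hZ hDexp
      (b := fun q : {q : Fin n × Fin n // q.1 < q.2} =>
        ⟨pcomm (x q.1.1) (x q.1.2), pcomm_mem_commutator _ _⟩)
      hDbasis fun q => ⟨Δ (x q.1.1) (x q.1.2), hΔ.1 _ _⟩
    have hσΔ := isBilinearForm_comp_pcomm hZ σ
    refine ⟨σ, congrFun₂ (hΔ.isBimultiplicative.eq_of_eqOn_closure hσΔ.isBimultiplicative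
      hgen ?_)⟩
    rintro _ ⟨i, rfl⟩ _ ⟨j, rfl⟩
    refine eq_of_antisymm_of_eq_on_lt x hanti (comp_pcomm_swap σ)
      (hΔ.apply_self_eq_one hodd hDexp hanti)
      (hσΔ.apply_self_eq_one hodd hDexp (comp_pcomm_swap σ)) (fun i j hij => ?_) i j
    exact congrArg Subtype.val (hσ ⟨(i, j), hij⟩).symm
  · rintro ⟨σ, hσ⟩
    obtain rfl : Δ = _ := funext₂ hσ
    exact ⟨isBilinearForm_comp_pcomm hZ σ, comp_pcomm_swap σ⟩

/-- let `G` be a finite `p`-group of class two with `G' = Z(G)`, generated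
by `x₁, …, x_n`, with `G/G'` elementary abelian of order `p^n` having the images of the
`xᵢ` as an `F_p`-basis and `G'` elementary abelian of order `p^{n(n-1)/2}` having the
commutators `[x_j, x_k]` (`j < k`) as an `F_p`-basis.  Then a map `Δ : G × G → G'` is an
anti-symmetric bilinear form on `G` if and only if `Δ(x, y) = σ([x, y])` for some
endomorphism `σ` of `G'`. -/
theorem stmt_18 {p n : ℕ} (hp : p.Prime) (hodd : Odd p) (hn : 2 ≤ n)
    {G : Type*} [Group G] [Fintype G] (hpG : IsPGroup p G)
    (hc2 : (⊤ : Subgroup G).lowerCentralSeries 2 = ⊥) (hc1 : (⊤ : Subgroup G).lowerCentralSeries 1 ≠ ⊥)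
    (hGZ : commutator G = Subgroup.center G)
    (x : Fin n → G) (hgen : Subgroup.closure (Set.range x) = ⊤)
    -- `G/G'` is elementary abelian of order `p^n` …
    (hQcard : Nat.card (G ⧸ commutator G) = p ^ n)
    (hQexp : ∀ g : G, ((g : G ⧸ commutator G)) ^ p = 1)
    -- … with the images of `x₁, …, x_n` as an `F_p`-basis
    (hQbasis : ∀ q : G ⧸ commutator G, ∃! e : Fin n → ZMod p,
      q = (((List.finRange n).map
        (fun i => ((x i : G ⧸ commutator G)) ^ (e i).val)).prod))
    -- `G'` is elementary abelian of order `p^{n(n-1)/2}` …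
    (hDcard : Nat.card ↥(commutator G) = p ^ (n * (n - 1) / 2))
    (hDexp : ∀ g ∈ commutator G, g ^ p = 1)
    -- … with the commutators `[x_j, x_k]`, `j < k`, as an `F_p`-basis
    (hDbasis : ∀ g ∈ commutator G,
      ∃! e : {q : Fin n × Fin n // q.1 < q.2} → ZMod p,
        g = (((Finset.univ : Finset {q : Fin n × Fin n // q.1 < q.2}).toList.map
          (fun q => (pcomm (x q.1.1) (x q.1.2)) ^ (e q).val)).prod)) :
    ∀ Δ : G → G → G,
      (IsBilinearForm Δ ∧ ∀ a b : G, Δ b a = (Δ a b)⁻¹) ↔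
      ∃ σ : ↥(commutator G) →* ↥(commutator G),
        ∀ a b : G, Δ a b = ↑(σ ⟨pcomm a b, pcomm_mem_commutator a b⟩) :=
  stmt_18_general hp hodd hGZ x hgen hDexp hDbasis
end
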